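/- Let X' ∼ ½N(μ, σ²I_d) + ½N(−μ, σ²I_d) where μ ∈ ℝ^d is a unit vector and σ > 0, and let v ∈ ℝ^d be a unit vector with α = v^⊤μ. Then E[ sgn(v^⊤X') · X' ] = ( 1 − 2Q(α/σ) ) μ + (2σ/√(2π)) · exp( −α²/(2σ²) ) · v. In particular, writing v = αμ + βυ with υ a unit vector orthogonal to μ and β = √(1−α²), this equals ( 1 − 2Q(α/σ) + (2σα/√(2π)) e^{−α²/(2σ²)} ) μ + (2σβ/√(2π)) e^{−α²/(2σ²)} υ. -/

import Mathlib

open MeasureTheory ProbabilityTheory Real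
open scoped ENNReal NNReal

/-- The standard normal CDF Φ. -/
noncomputable def stdPhi (x : ℝ) : ℝ := (gaussianReal 0 1 (Set.Iic x)).toReal

/-- Q = 1 - Φ. -/
noncomputable def stdQ (x : ℝ) : ℝ := 1 - stdPhi x

/-- Euclidean dot product on `Fin d → ℝ`. -/
def dotp {d : ℕ} (a b : Fin d → ℝ) : ℝ := ∑ i, a i * b i

/-- Isotropic Gaussian `N(m, v I_d)` on `Fin d → ℝ` (v is the variance). -/
noncomputable def gaussPi (d : ℕ) (m : Fin d → ℝ) (v : ℝ) : Measure (Fin d → ℝ) :=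
  Measure.pi fun i => gaussianReal (m i) (Real.toNNReal v)

/-- Joint law of `(X, Y)` for the binary Gaussian mixture model bGMM(μ, σ):
`Y` uniform on `{-1, 1}` and `X | Y ∼ N(Yμ, σ² I_d)`. -/
noncomputable def bGMM (d : ℕ) (m : Fin d → ℝ) (σ : ℝ) : Measure ((Fin d → ℝ) × ℝ) :=
  (1/2 : ℝ≥0∞) • (gaussPi d m (σ^2)).map (fun x => (x, (1:ℝ)))
    + (1/2 : ℝ≥0∞) • (gaussPi d (-m) (σ^2)).map (fun x => (x, (-1:ℝ)))

/-- The marginal mixture `p_μ = ½ N(μ, σ² I_d) + ½ N(-μ, σ² I_d)`. -/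
noncomputable def gmix (d : ℕ) (m : Fin d → ℝ) (σ : ℝ) : Measure (Fin d → ℝ) :=
  (1/2 : ℝ≥0∞) • gaussPi d m (σ^2) + (1/2 : ℝ≥0∞) • gaussPi d (-m) (σ^2)

/-- Sign function with values in `{-1, 1}`. -/
noncomputable def sgn (u : ℝ) : ℝ := if 0 < u then 1 else -1

/-!
Write a sample of `N(m, σ² I)` as `m + σ Z` with `Z` standard Gaussian, and let `W = ⟪v, Z⟫`,
which is `N(0, 1)` for a unit vector `v`. For every `u`, `⟪u, Z⟫ = ⟪u, v⟫ W + ⟪u - ⟪u, v⟫ v, Z⟫`,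
and the second term is a centred Gaussian uncorrelated with `W`, hence independent of it. Hence
`E[sgn(t + W) Z] = E[sgn(t + W) W] v = 2 φ(t) v` with `φ` the standard normal density (the
one-dimensional integral follows from `(-φ)' = x φ`), while `E[sgn(t + W)] = 2 Φ(t) - 1 = 1 - 2 Q(t)`.
The two components of the mixture contribute the same vector because `Q(-s) = 1 - Q(s)` and `φ`
is even.
-/

open Set Filter WithLp
open scoped RealInnerProductSpace

lemma sgn_add_eq_indicator (t w : ℝ) : sgn (t + w) = 2 * (Ioi (-t)).indicator 1 w - 1 := by
  by_cases h : 0 < t + w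
  · rw [sgn, if_pos h, indicator_of_mem (mem_Ioi.2 (by linarith))]; norm_num
  · rw [sgn, if_neg h, indicator_of_notMem fun hw => h (by linarith [mem_Ioi.1 hw])]; norm_num

lemma sgn_mul_of_pos {c : ℝ} (hc : 0 < c) (u : ℝ) : sgn (c * u) = sgn u := by
  simp only [sgn, mul_pos_iff_of_pos_left hc]

@[fun_prop]
lemma measurable_sgn : Measurable sgn :=
  Measurable.ite measurableSet_Ioi measurable_const measurable_const

lemma norm_sgn (u : ℝ) : ‖sgn u‖ = 1 := by
  unfold sgn; split_ifs <;> simp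

lemma MeasureTheory.Integrable.sgn_smul {α F : Type*} [MeasurableSpace α] [NormedAddCommGroup F]
    [NormedSpace ℝ F] {μ : Measure α} {f : α → ℝ} {g : α → F} (hf : Measurable f)
    (hg : Integrable g μ) : Integrable (fun x => sgn (f x) • g x) μ :=
  hg.bdd_smul 1 (measurable_sgn.comp hf).aestronglyMeasurable
    (ae_of_all _ fun _ => (norm_sgn _).le)

lemma stdPhi_neg (x : ℝ) : stdPhi (-x) = 1 - stdPhi x := by
  have := nullSingletonClass_gaussianReal (μ := 0) one_ne_zero
  have hsymm : (gaussianReal 0 1).map (fun w => -w) = gaussianReal 0 1 := by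
    rw [gaussianReal_map_neg, neg_zero]
  calc stdPhi (-x) = ((gaussianReal 0 1).map (fun w => -w)).real (Iic (-x)) := by
        rw [hsymm]; rfl
    _ = (gaussianReal 0 1).real (Iic x)ᶜ := by
        rw [map_measureReal_apply measurable_neg measurableSet_Iic, compl_Iic]
        exact measureReal_congr (by simpa using Ioi_ae_eq_Ici.symm)
    _ = 1 - stdPhi x := probReal_compl_eq_one_sub measurableSet_Iic

lemma stdQ_neg (x : ℝ) : stdQ (-x) = 1 - stdQ x := by
  rw [stdQ, stdQ, stdPhi_neg]

lemma gaussianPDFReal_zero_one (w : ℝ) :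
    gaussianPDFReal 0 1 w = Real.exp (-w ^ 2 / 2) / Real.sqrt (2 * π) := by
  simp [gaussianPDFReal, div_eq_inv_mul]

lemma setIntegral_Ioi_id_gaussianReal (c : ℝ) :
    ∫ w in Ioi c, w ∂gaussianReal 0 1 = gaussianPDFReal 0 1 c := by
  have hderiv (w : ℝ) :
      HasDerivAt (fun w => -gaussianPDFReal 0 1 w) (w * gaussianPDFReal 0 1 w) w := by
    simp only [gaussianPDFReal_zero_one]
    refine (((hasDerivAt_pow 2 w).neg.div_const 2).exp.div_const (Real.sqrt (2 * π))).neg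
      |>.congr_deriv ?_
    simp only [Pi.neg_apply]; ring
  have hint : Integrable (fun w => w * gaussianPDFReal 0 1 w) := by
    simp only [gaussianPDFReal_zero_one]
    convert (integrable_mul_exp_neg_mul_sq (b := 1 / 2) (by norm_num)).div_const
      (Real.sqrt (2 * π)) using 1
    ext w; rw [mul_div_assoc]; ring_nf
  have hlim : Tendsto (fun w => -gaussianPDFReal 0 1 w) atTop (nhds 0) := by
    simp only [gaussianPDFReal_zero_one]
    have : Tendsto (fun w : ℝ => -w ^ 2 / 2) atTop atBot :=
      (tendsto_neg_atTop_atBot.comp (tendsto_pow_atTop two_ne_zero)).atBot_div_const two_pos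
    simpa using ((Real.tendsto_exp_atBot.comp this).div_const (Real.sqrt (2 * π))).neg
  rw [← integral_indicator measurableSet_Ioi, integral_gaussianReal_eq_integral_smul one_ne_zero]
  simp_rw [smul_eq_mul, ← indicator_mul_right, mul_comm (gaussianPDFReal 0 1 _)]
  rw [integral_indicator measurableSet_Ioi, integral_Ioi_of_hasDerivAt_of_tendsto'
    (fun w _ => hderiv w) hint.integrableOn hlim]
  ring

lemma integral_sgn_add_gaussianReal (t : ℝ) :
    ∫ w, sgn (t + w) ∂gaussianReal 0 1 = 1 - 2 * stdQ t := by
  simp_rw [sgn_add_eq_indicator]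
  rw [integral_sub ((integrable_const _).indicator measurableSet_Ioi |>.const_mul 2)
    (integrable_const _), integral_const_mul, integral_indicator_one measurableSet_Ioi,
    ← compl_Iic, probReal_compl_eq_one_sub measurableSet_Iic, integral_const, probReal_univ,
    one_smul, show (gaussianReal 0 1).real (Iic (-t)) = stdPhi (-t) from rfl, stdPhi_neg, stdQ]
  ring

lemma integral_sgn_add_mul_gaussianReal (t : ℝ) :
    ∫ w, sgn (t + w) * w ∂gaussianReal 0 1 = 2 * gaussianPDFReal 0 1 t := by
  have hid : Integrable (fun w : ℝ => w) (gaussianReal 0 1) := IsGaussian.integrable_id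
  have hind (w : ℝ) : (Ioi (-t)).indicator 1 w * w = (Ioi (-t)).indicator (fun w => w) w := by
    simp [indicator_apply]
  simp_rw [sgn_add_eq_indicator, sub_mul, one_mul, mul_assoc, hind]
  rw [integral_sub ((hid.indicator measurableSet_Ioi).const_mul 2) hid, integral_const_mul,
    integral_indicator measurableSet_Ioi, setIntegral_Ioi_id_gaussianReal, integral_id_gaussianReal]
  simp [gaussianPDFReal_zero_one]

lemma gaussianReal_map_const_add_mul (a σ : ℝ) :
    (gaussianReal 0 1).map (fun y => a + σ * y) = gaussianReal a (σ ^ 2).toNNReal := by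
  have : (fun y => a + σ * y) = (fun y => a + y) ∘ (fun y => σ * y) := rfl
  rw [this, ← Measure.map_map (by fun_prop) (by fun_prop), gaussianReal_map_const_mul,
    gaussianReal_map_const_add, mul_zero, zero_add, mul_one]
  congr 1
  ext; simp [sq_nonneg]

section StdGaussian

variable {E : Type*} [NormedAddCommGroup E] [InnerProductSpace ℝ E] [FiniteDimensional ℝ E]
  [MeasurableSpace E] [BorelSpace E]

lemma map_inner_stdGaussian {v : E} (hv : ‖v‖ = 1) :
    (stdGaussian E).map (fun z => ⟪v, z⟫) = gaussianReal 0 1 := by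
  have h : HasGaussianLaw (fun z : E => ⟪v, z⟫) (stdGaussian E) :=
    IsGaussian.hasGaussianLaw_id.map_fun (innerSL ℝ v)
  have hmean := integral_strongDual_stdGaussian (E := E) (innerSL ℝ v)
  have hvar := variance_dual_stdGaussian (E := E) (innerSL ℝ v)
  rw [innerSL_apply_norm, hv, one_pow] at hvar
  rw [h.map_eq_gaussianReal]
  change gaussianReal (∫ z, innerSL ℝ v z ∂stdGaussian E)
    (Var[⇑(innerSL ℝ v); stdGaussian E]).toNNReal = _
  rw [hmean, hvar, Real.toNNReal_one]

lemma integral_comp_inner_stdGaussian {v : E} (hv : ‖v‖ = 1) {f : ℝ → ℝ} (hf : Measurable f) :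
    ∫ z, f ⟪v, z⟫ ∂stdGaussian E = ∫ w, f w ∂gaussianReal 0 1 := by
  rw [← map_inner_stdGaussian hv, integral_map (by fun_prop) hf.aestronglyMeasurable]

lemma indepFun_inner_stdGaussian {v w : E} (h : ⟪v, w⟫ = 0) :
    IndepFun (fun z => ⟪v, z⟫) (fun z => ⟪w, z⟫) (stdGaussian E) := by
  have hlaw := (IsGaussian.hasGaussianLaw_id (μ := stdGaussian E)).map_fun
    ((innerSL ℝ v).prod (innerSL ℝ w))
  refine HasGaussianLaw.indepFun_of_covariance_eq_zero hlaw ?_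
  rw [← covarianceBilin_apply_eq_cov IsGaussian.memLp_two_id, covarianceBilin_stdGaussian]
  exact h

lemma integral_sgn_add_inner_stdGaussian {v : E} (hv : ‖v‖ = 1) (t : ℝ) :
    ∫ z, sgn (t + ⟪v, z⟫) ∂stdGaussian E = 1 - 2 * stdQ t := by
  rw [integral_comp_inner_stdGaussian hv (f := fun x => sgn (t + x)) (by fun_prop),
    integral_sgn_add_gaussianReal]

lemma integral_sgn_add_inner_mul_inner_stdGaussian {v : E} (hv : ‖v‖ = 1) (t : ℝ) (u : E) :
    ∫ z, sgn (t + ⟪v, z⟫) * ⟪u, z⟫ ∂stdGaussian E = 2 * gaussianPDFReal 0 1 t * ⟪u, v⟫ := by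
  set w := u - ⟪u, v⟫ • v
  have hvw : ⟪v, w⟫ = 0 := by
    simp [w, inner_sub_right, inner_smul_right, hv, real_inner_comm]
  have hsplit (z : E) : sgn (t + ⟪v, z⟫) * ⟪u, z⟫
      = ⟪u, v⟫ * (sgn (t + ⟪v, z⟫) * ⟪v, z⟫) + sgn (t + ⟪v, z⟫) * ⟪w, z⟫ := by
    simp only [w, inner_sub_left, real_inner_smul_left]; ring
  have hint (x : E) : Integrable (fun z => sgn (t + ⟪v, z⟫) * ⟪x, z⟫) (stdGaussian E) :=
    (IsGaussian.integrable_dual _ (innerSL ℝ x)).sgn_smul (by fun_prop)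
  have hmean : ∫ z, ⟪w, z⟫ ∂stdGaussian E = 0 := integral_strongDual_stdGaussian (innerSL ℝ w)
  simp_rw [hsplit]
  rw [integral_add ((hint v).const_mul _) (hint w), integral_const_mul,
    integral_comp_inner_stdGaussian hv (f := fun x => sgn (t + x) * x) (by fun_prop),
    integral_sgn_add_mul_gaussianReal, (indepFun_inner_stdGaussian hvw).integral_fun_comp_mul_comp
      (f := fun x => sgn (t + x)) (g := fun x => x) (by fun_prop) (by fun_prop)
      (measurable_sgn.comp (measurable_const_add t)).aestronglyMeasurable aestronglyMeasurable_id,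
    hmean, mul_zero, add_zero, mul_comm]

lemma integrable_sgn_add_inner_smul_stdGaussian (v : E) (t : ℝ) :
    Integrable (fun z => sgn (t + ⟪v, z⟫) • z) (stdGaussian E) :=
  IsGaussian.integrable_id.sgn_smul (by fun_prop)

lemma integral_sgn_add_inner_smul_stdGaussian {v : E} (hv : ‖v‖ = 1) (t : ℝ) :
    ∫ z, sgn (t + ⟪v, z⟫) • z ∂stdGaussian E = (2 * gaussianPDFReal 0 1 t) • v := by
  refine ext_inner_left ℝ fun u => ?_
  rw [← integral_inner (integrable_sgn_add_inner_smul_stdGaussian v t), real_inner_smul_right,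
    ← integral_sgn_add_inner_mul_inner_stdGaussian hv]
  simp_rw [real_inner_smul_right]

lemma integral_sgn_inner_smul_affine_stdGaussian {v : E} (hv : ‖v‖ = 1) (m : E) {σ : ℝ}
    (hσ : 0 < σ) :
    ∫ z, sgn ⟪v, m + σ • z⟫ • (m + σ • z) ∂stdGaussian E
      = (1 - 2 * stdQ (⟪v, m⟫ / σ)) • m + (2 * σ * gaussianPDFReal 0 1 (⟪v, m⟫ / σ)) • v := by
  set t := ⟪v, m⟫ / σ
  have hsgn (z : E) : sgn ⟪v, m + σ • z⟫ = sgn (t + ⟪v, z⟫) := by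
    rw [inner_add_right, real_inner_smul_right, ← sgn_mul_of_pos hσ (t + _), mul_add,
      mul_div_cancel₀ _ hσ.ne']
  have hint : Integrable (fun z => σ • sgn (t + ⟪v, z⟫) • z) (stdGaussian E) :=
    (integrable_sgn_add_inner_smul_stdGaussian v t).smul σ
  simp_rw [hsgn, smul_add, smul_comm _ σ]
  rw [integral_add ((integrable_const m).sgn_smul (by fun_prop)) hint, integral_smul_const,
    integral_smul, integral_sgn_add_inner_stdGaussian hv, integral_sgn_add_inner_smul_stdGaussian hv,
    smul_smul]
  ring_nf

end StdGaussian

section Coordinates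

variable {d : ℕ}

lemma dotp_eq_inner (a b : Fin d → ℝ) : dotp a b = ⟪toLp 2 a, toLp 2 b⟫ := by
  simp [dotp, PiLp.inner_apply, mul_comm]

lemma gaussPi_eq_map_stdGaussian (m : Fin d → ℝ) (σ : ℝ) :
    gaussPi d m (σ ^ 2)
      = (stdGaussian (EuclideanSpace ℝ (Fin d))).map (fun z => ofLp (toLp 2 m + σ • z)) := by
  rw [← map_pi_eq_stdGaussian, Measure.map_map (by fun_prop) (by fun_prop)]
  have : (fun z => ofLp (toLp 2 m + σ • z)) ∘ toLp 2 = fun (x : Fin d → ℝ) i => m i + σ * x i := by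
    ext; simp
  rw [this, Measure.pi_map_pi (f := fun i y => m i + σ * y) (fun _ => by fun_prop)]
  simp_rw [gaussianReal_map_const_add_mul]
  rfl

lemma integrable_sgn_dotp_smul_gaussPi (v m : Fin d → ℝ) (s : ℝ) :
    Integrable (fun x => sgn (dotp v x) • x) (gaussPi d m s) :=
  (integrable_pi_iff.2 fun _ => integrable_eval IsGaussian.integrable_id).sgn_smul
    (by unfold dotp; fun_prop)

lemma integral_sgn_dotp_smul_gaussPi {v : Fin d → ℝ} (hv : dotp v v = 1) (m : Fin d → ℝ)
    {σ : ℝ} (hσ : 0 < σ) :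
    ∫ x, sgn (dotp v x) • x ∂gaussPi d m (σ ^ 2)
      = (1 - 2 * stdQ (dotp v m / σ)) • m
        + (2 * σ * gaussianPDFReal 0 1 (dotp v m / σ)) • v := by
  have hv' : ‖toLp 2 v‖ = 1 := by
    rw [norm_eq_sqrt_real_inner, ← dotp_eq_inner, hv, Real.sqrt_one]
  have h (y : EuclideanSpace ℝ (Fin d)) : sgn (dotp v (ofLp y)) • ofLp y
      = EuclideanSpace.equiv (Fin d) ℝ (sgn ⟪toLp 2 v, y⟫ • y) := by
    rw [dotp_eq_inner, toLp_ofLp]; rfl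
  rw [gaussPi_eq_map_stdGaussian, integral_map (by fun_prop) (by unfold dotp; fun_prop)]
  simp_rw [h]
  rw [ContinuousLinearEquiv.integral_comp_comm,
    integral_sgn_inner_smul_affine_stdGaussian hv' _ hσ, ← dotp_eq_inner]
  rfl

lemma integral_gmix {F : Type*} [NormedAddCommGroup F] [NormedSpace ℝ F]
    {f : (Fin d → ℝ) → F} {m : Fin d → ℝ} {σ : ℝ}
    (hf₁ : Integrable f (gaussPi d m (σ ^ 2))) (hf₂ : Integrable f (gaussPi d (-m) (σ ^ 2))) :
    ∫ x, f x ∂gmix d m σ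
      = (1 / 2 : ℝ) • ∫ x, f x ∂gaussPi d m (σ ^ 2)
        + (1 / 2 : ℝ) • ∫ x, f x ∂gaussPi d (-m) (σ ^ 2) := by
  rw [gmix, integral_add_measure (hf₁.smul_measure (by simp)) (hf₂.smul_measure (by simp)),
    integral_smul_measure, integral_smul_measure]
  simp

end Coordinates

theorem stmt12_general (d : ℕ) (μ0 : Fin d → ℝ) (σ : ℝ) (hσ : 0 < σ)
    (v : Fin d → ℝ) (hv : dotp v v = 1) (α : ℝ) (hα : α = dotp v μ0) :
    (∫ x, sgn (dotp v x) • x ∂(gmix d μ0 σ))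
      = (1 - 2 * stdQ (α/σ)) • μ0
        + ((2*σ/Real.sqrt (2*π)) * Real.exp (-α^2/(2*σ^2))) • v ∧
    (∀ υ : Fin d → ℝ, dotp υ υ = 1 → dotp μ0 υ = 0 →
      ∀ β : ℝ, β = Real.sqrt (1 - α^2) → v = α • μ0 + β • υ →
      (∫ x, sgn (dotp v x) • x ∂(gmix d μ0 σ))
        = (1 - 2 * stdQ (α/σ) + (2*σ*α/Real.sqrt (2*π)) * Real.exp (-α^2/(2*σ^2))) • μ0
          + ((2*σ*β/Real.sqrt (2*π)) * Real.exp (-α^2/(2*σ^2))) • υ) := by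
  have hneg : dotp v (-μ0) = -α := by simp [dotp, hα]
  have hφ : gaussianPDFReal 0 1 (α / σ) = Real.exp (-α ^ 2 / (2 * σ ^ 2)) / Real.sqrt (2 * π) := by
    rw [gaussianPDFReal_zero_one]; congr 2; field_simp
  have hmean : ∫ x, sgn (dotp v x) • x ∂gmix d μ0 σ
      = (1 - 2 * stdQ (α / σ)) • μ0
        + ((2 * σ / Real.sqrt (2 * π)) * Real.exp (-α ^ 2 / (2 * σ ^ 2))) • v := by
    rw [integral_gmix (integrable_sgn_dotp_smul_gaussPi v μ0 _)
      (integrable_sgn_dotp_smul_gaussPi v (-μ0) _), integral_sgn_dotp_smul_gaussPi hv _ hσ,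
      integral_sgn_dotp_smul_gaussPi hv _ hσ, hneg, ← hα, neg_div, stdQ_neg,
      show gaussianPDFReal 0 1 (-(α / σ)) = gaussianPDFReal 0 1 (α / σ) by
        simp [gaussianPDFReal_zero_one], hφ]
    module
  refine ⟨hmean, fun υ _ _ β _ hdecomp => ?_⟩
  rw [hmean, hdecomp]
  module

/-- the mean of one pseudo-labelled sample:
`E[sgn(v⊤X')·X'] = (1 − 2Q(α/σ))μ + (2σ/√(2π)) e^{−α²/(2σ²)} v`, and in the decomposition
`v = αμ + βυ` this equals
`(1 − 2Q(α/σ) + (2σα/√(2π)) e^{−α²/(2σ²)})μ + (2σβ/√(2π)) e^{−α²/(2σ²)} υ`. -/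
theorem stmt12 (d : ℕ) (μ0 : Fin d → ℝ) (hμ0 : dotp μ0 μ0 = 1) (σ : ℝ) (hσ : 0 < σ)
    (v : Fin d → ℝ) (hv : dotp v v = 1) (α : ℝ) (hα : α = dotp v μ0) :
    (∫ x, sgn (dotp v x) • x ∂(gmix d μ0 σ))
      = (1 - 2 * stdQ (α/σ)) • μ0
        + ((2*σ/Real.sqrt (2*π)) * Real.exp (-α^2/(2*σ^2))) • v ∧
    (∀ υ : Fin d → ℝ, dotp υ υ = 1 → dotp μ0 υ = 0 →
      ∀ β : ℝ, β = Real.sqrt (1 - α^2) → v = α • μ0 + β • υ →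
      (∫ x, sgn (dotp v x) • x ∂(gmix d μ0 σ))
        = (1 - 2 * stdQ (α/σ) + (2*σ*α/Real.sqrt (2*π)) * Real.exp (-α^2/(2*σ^2))) • μ0
          + ((2*σ*β/Real.sqrt (2*π)) * Real.exp (-α^2/(2*σ^2))) • υ) :=
  stmt12_general d μ0 σ hσ v hv α hα
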